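/- Support admits contraction in the resource bunch: for any base B, contextual bunch P(·), bunch S, and formula φ, if ⊩_B^{P(S⨟S)} φ, then ⊩_B^{P(S)} φ. -/
import Mathlib


/-- Bunches over a set `X`: trees with additive (`semi`, unit `aunit`) and
multiplicative (`comma`, unit `munit`) context-formers. -/
inductive Bunch (X : Type) : Type
  | leaf (x : X)
  | aunit
  | munit
  | semi (Γ Δ : Bunch X)
  | comma (Γ Δ : Bunch X)

/-- Bunches with a single hole (contextual bunches). -/
inductive BunchCtx (X : Type) : Type
  | hole
  | semiL (c : BunchCtx X) (Δ : Bunch X)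
  | semiR (Γ : Bunch X) (c : BunchCtx X)
  | commaL (c : BunchCtx X) (Δ : Bunch X)
  | commaR (Γ : Bunch X) (c : BunchCtx X)

/-- Plugging a bunch into the hole of a contextual bunch. -/
def BunchCtx.fill {X : Type} : BunchCtx X → Bunch X → Bunch X
  | .hole, Δ => Δ
  | .semiL c Θ, Δ => .semi (c.fill Δ) Θ
  | .semiR Γ c, Δ => .semi Γ (c.fill Δ)
  | .commaL c Θ, Δ => .comma (c.fill Δ) Θ
  | .commaR Γ c, Δ => .comma Γ (c.fill Δ)

/-- Composition of contextual bunches: `(c.comp d).fill Δ = c.fill (d.fill Δ)`. -/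
def BunchCtx.comp {X : Type} : BunchCtx X → BunchCtx X → BunchCtx X
  | .hole, d => d
  | .semiL c Θ, d => .semiL (c.comp d) Θ
  | .semiR Γ c, d => .semiR Γ (c.comp d)
  | .commaL c Θ, d => .commaL (c.comp d) Θ
  | .commaR Γ c, d => .commaR Γ (c.comp d)

/-- Coherent equivalence: least equivalence relation containing the
commutative-monoid equations for each context-former with its unit, closed
under congruence (substitution of equivalent sub-bunches). -/
inductive CohEq {X : Type} : Bunch X → Bunch X → Prop
  | refl (Γ) : CohEq Γ Γ
  | symm {Γ Δ} : CohEq Γ Δ → CohEq Δ Γ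
  | trans {Γ Δ Θ} : CohEq Γ Δ → CohEq Δ Θ → CohEq Γ Θ
  | semiAssoc (Γ₁ Γ₂ Γ₃) : CohEq (.semi (.semi Γ₁ Γ₂) Γ₃) (.semi Γ₁ (.semi Γ₂ Γ₃))
  | semiComm (Γ₁ Γ₂) : CohEq (.semi Γ₁ Γ₂) (.semi Γ₂ Γ₁)
  | semiUnit (Γ) : CohEq (.semi Γ .aunit) Γ
  | commaAssoc (Γ₁ Γ₂ Γ₃) : CohEq (.comma (.comma Γ₁ Γ₂) Γ₃) (.comma Γ₁ (.comma Γ₂ Γ₃))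
  | commaComm (Γ₁ Γ₂) : CohEq (.comma Γ₁ Γ₂) (.comma Γ₂ Γ₁)
  | commaUnit (Γ) : CohEq (.comma Γ .munit) Γ
  | congr (c : BunchCtx X) {Δ Δ'} : CohEq Δ Δ' → CohEq (c.fill Δ) (c.fill Δ')

/-- Bunch-extension `Γ ⪰ Γ'`: least transitive relation such that `Γ ⪰ Γ'`
whenever `Γ` is coherently equivalent to `Γ'` with one occurrence of a
sub-bunch `Δ` replaced by `Δ ⨟ Δ'`. -/
inductive BunchExt {X : Type} : Bunch X → Bunch X → Prop
  | step (c : BunchCtx X) (Δ Δ' : Bunch X) {Γ : Bunch X} :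
      CohEq Γ (c.fill (.semi Δ Δ')) → BunchExt Γ (c.fill Δ)
  | trans {Γ Δ Θ} : BunchExt Γ Δ → BunchExt Δ Θ → BunchExt Γ Θ

/-- An atomic rule: a finite list of premiss sequents of atoms and a
conclusion sequent of atoms. -/
structure AtomicRule (A : Type) : Type where
  prems : List (Bunch A × A)
  concl : Bunch A × A

/-- A base: a set of atomic rules. -/
abbrev Base (A : Type) := Set (AtomicRule A)

/-- Derivability in a base. -/
inductive Deriv {A : Type} (B : Base A) : Bunch A → A → Prop
  | taut (p : A) : Deriv B (.leaf p) p
  | rule (r : AtomicRule A) (hr : r ∈ B)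
      (hp : ∀ pr ∈ r.prems, Deriv B pr.1 pr.2) : Deriv B r.concl.1 r.concl.2
  | weak (c : BunchCtx A) (Q Q' : Bunch A) {p : A} :
      Deriv B (c.fill Q) p → Deriv B (c.fill (.semi Q Q')) p
  | cont (c : BunchCtx A) (Q : Bunch A) {p : A} :
      Deriv B (c.fill (.semi Q Q)) p → Deriv B (c.fill Q) p
  | exch (c : BunchCtx A) {Q Q' : Bunch A} {p : A} :
      Deriv B (c.fill Q) p → CohEq Q Q' → Deriv B (c.fill Q') p
  | cut (c : BunchCtx A) {T : Bunch A} {q p : A} :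
      Deriv B T q → Deriv B (c.fill (.leaf q)) p → Deriv B (c.fill T) p

/-- Formulae of BI. -/
inductive Form (A : Type) : Type
  | atom (p : A)
  | top
  | bot
  | mtop
  | and (φ ψ : Form A)
  | or (φ ψ : Form A)
  | imp (φ ψ : Form A)
  | star (φ ψ : Form A)
  | wand (φ ψ : Form A)

/-- Support of a formula in a base relative to an atomic resource bunch. -/
def suppF {A : Type} : Form A → Base A → Bunch A → Prop
  | .atom p, B, S => Deriv B S p
  | .and φ ψ, B, S => ∀ (X : Base A), B ⊆ X → ∀ (U : BunchCtx A) (p : A),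
      (∀ (Y : Base A), X ⊆ Y → ∀ (V : Bunch A),
        (∃ Q₁ Q₂, BunchExt V Q₁ ∧ BunchExt V Q₂ ∧ suppF φ Y Q₁ ∧ suppF ψ Y Q₂) →
        Deriv Y (U.fill V) p) →
      Deriv X (U.fill S) p
  | .star φ ψ, B, S => ∀ (X : Base A), B ⊆ X → ∀ (U : BunchCtx A) (p : A),
      (∀ (Y : Base A), X ⊆ Y → ∀ (V : Bunch A),
        (∃ Q₁ Q₂, BunchExt V (.comma Q₁ Q₂) ∧ suppF φ Y Q₁ ∧ suppF ψ Y Q₂) →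
        Deriv Y (U.fill V) p) →
      Deriv X (U.fill S) p
  | .or φ ψ, B, S => ∀ (X : Base A), B ⊆ X → ∀ (U : BunchCtx A) (p : A),
      (∀ (Y : Base A), X ⊆ Y → ∀ (V : Bunch A), suppF φ Y V → Deriv Y (U.fill V) p) →
      (∀ (Y : Base A), X ⊆ Y → ∀ (V : Bunch A), suppF ψ Y V → Deriv Y (U.fill V) p) →
      Deriv X (U.fill S) p
  | .imp φ ψ, B, S => ∀ (X : Base A), B ⊆ X → ∀ (U : Bunch A),
      suppF φ X U → suppF ψ X (.semi S U)
  | .wand φ ψ, B, S => ∀ (X : Base A), B ⊆ X → ∀ (U : Bunch A),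
      suppF φ X U → suppF ψ X (.comma S U)
  | .bot, B, S => ∀ (U : BunchCtx A) (p : A), Deriv B (U.fill S) p
  | .top, B, S => ∀ (X : Base A), B ⊆ X → ∀ (U : BunchCtx A) (p : A),
      Deriv X (U.fill .aunit) p → Deriv X (U.fill S) p
  | .mtop, B, S => ∀ (X : Base A), B ⊆ X → ∀ (U : BunchCtx A) (p : A),
      Deriv X (U.fill .munit) p → Deriv X (U.fill S) p

/-- Support of a bunch of formulae. -/
def suppB {A : Type} : Bunch (Form A) → Base A → Bunch A → Prop
  | .leaf φ, B, S => suppF φ B S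
  | .aunit, _, _ => True
  | .munit, _, S => BunchExt S .munit
  | .semi Γ Δ, B, S =>
      ∃ Q₁ Q₂, BunchExt S Q₁ ∧ BunchExt S Q₂ ∧ suppB Γ B Q₁ ∧ suppB Δ B Q₂
  | .comma Γ Δ, B, S =>
      ∃ Q₁ Q₂, BunchExt S (.comma Q₁ Q₂) ∧ suppB Γ B Q₁ ∧ suppB Δ B Q₂

/-- The support judgement `Γ ⊩_B^{R(·)} φ` (clause (Inf)). -/
def SuppInf {A : Type} (B : Base A) (R : BunchCtx A) (Γ : Bunch (Form A))
    (φ : Form A) : Prop :=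
  ∀ (X : Base A), B ⊆ X → ∀ (U : Bunch A), suppB Γ X U → suppF φ X (R.fill U)

/-- Validity: support with the identity contextual bunch in every base. -/
def Valid {A : Type} (Γ : Bunch (Form A)) (φ : Form A) : Prop :=
  ∀ B : Base A, SuppInf B .hole Γ φ

/-- View a bunch of atoms as a bunch of atomic formulae. -/
def Bunch.atomize {A : Type} : Bunch A → Bunch (Form A)
  | .leaf p => .leaf (.atom p)
  | .aunit => .aunit
  | .munit => .munit
  | .semi Γ Δ => .semi Γ.atomize Δ.atomize
  | .comma Γ Δ => .comma Γ.atomize Δ.atomize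

lemma BunchCtx.fill_comp {X : Type} (c d : BunchCtx X) (Δ : Bunch X) :
    (c.comp d).fill Δ = c.fill (d.fill Δ) := by
  induction c <;> simp [BunchCtx.comp, BunchCtx.fill, *]

/-- support admits contraction in the resource bunch. -/
theorem suppF_resource_contraction {A : Type} (B : Base A) (P : BunchCtx A)
    (S : Bunch A) (φ : Form A)
    (h : suppF φ B (P.fill (Bunch.semi S S))) : suppF φ B (P.fill S) := by
  induction φ generalizing B P S with
  | atom p => exact Deriv.cont P S h
  | top =>
    intro X hX U p hU
    have := h X hX U p hU
    rw [← BunchCtx.fill_comp] at this ⊢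
    exact Deriv.cont (U.comp P) S this
  | bot =>
    intro U p
    have := h U p
    rw [← BunchCtx.fill_comp] at this ⊢
    exact Deriv.cont (U.comp P) S this
  | mtop =>
    intro X hX U p hU
    have := h X hX U p hU
    rw [← BunchCtx.fill_comp] at this ⊢
    exact Deriv.cont (U.comp P) S this
  | and φ ψ ihφ ihψ =>
    intro X hX U p hU
    have := h X hX U p hU
    rw [← BunchCtx.fill_comp] at this ⊢
    exact Deriv.cont (U.comp P) S this
  | or φ ψ ihφ ihψ =>
    intro X hX U p hU₁ hU₂
    have := h X hX U p hU₁ hU₂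
    rw [← BunchCtx.fill_comp] at this ⊢
    exact Deriv.cont (U.comp P) S this
  | star φ ψ ihφ ihψ =>
    intro X hX U p hU
    have := h X hX U p hU
    rw [← BunchCtx.fill_comp] at this ⊢
    exact Deriv.cont (U.comp P) S this
  | imp φ ψ ihφ ihψ =>
    intro X hX U hU
    exact ihψ X (.semiL P U) S (h X hX U hU)
  | wand φ ψ ihφ ihψ =>
    intro X hX U hU
    exact ihψ X (.commaL P U) S (h X hX U hU)
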